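/- Fix constants c > 0 and λ > 0 and a point x ∈ ℝ. Then (λ·e^{-λ t}/(2c))·I₀((λ/c)·√(c²t² − x²)) = (1/(2c))·√(λ/(2π t)) + O(t^{-3/2}) as t → ∞; that is, there exist constants C > 0 and T > |x|/c such that for all t ≥ T, |(λ·e^{-λ t}/(2c))·I₀((λ/c)·√(c²t² − x²)) − (1/(2c))·√(λ/(2π t))| ≤ C·t^{-3/2}. -/

import Mathlib

/-!
Termwise integration of the power series gives `I₀(z) = π⁻¹ ∫₀^π exp (z cos θ) dθ`, so
`exp (-z) I₀(z) = π⁻¹ ∫₀^π exp (-z (1 - cos θ)) dθ`. Laplace's method compares this with the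
Gaussian integral `π⁻¹ ∫₀^∞ exp (-z θ² / 2) dθ = (2π z)^(-1/2)`: on `[0, π]` the two integrands
differ by at most `(z / 24) θ⁴ exp (-2 z θ² / π²)`, and the Gaussian tail over `[π, ∞)` is at most
`π⁻² ∫ θ² exp (-z θ² / 2)`; both are `O(z^(-3/2))` by the Gamma-function moments of the Gaussian.
The theorem is this estimate at `z = λ √(t² - x² / c²)`, which differs from `w = λ t` by
`O(1/t)`, so that the factor `exp (z - w)` and the passage from `(2π z)^(-1/2)` to `(2π w)^(-1/2)`
cost only `O(t^(-3/2))`.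
-/

open Real Filter Topology

/-- Modified Bessel function of the first kind of nonnegative integer order `n`,
defined by its everywhere-convergent power series. -/
noncomputable def besselI (n : ℕ) (z : ℝ) : ℝ :=
  ∑' k : ℕ, (1 / (Nat.factorial k * Nat.factorial (k + n) : ℝ)) * (z / 2) ^ (2 * k + n)

/-- Modified Struve function of order zero, defined by its power series. -/
noncomputable def struveL0 (z : ℝ) : ℝ :=
  ∑' k : ℕ, (1 / (Real.Gamma ((k : ℝ) + 3 / 2)) ^ 2) * (z / 2) ^ (2 * k + 1)

open MeasureTheory Set

lemma integral_cos_pow_add_two_zero_pi (n : ℕ) :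
    ∫ x in (0)..π, cos x ^ (n + 2) = (n + 1) / (n + 2) * ∫ x in (0)..π, cos x ^ n := by
  simp [integral_cos_pow]

lemma integral_cos_pow_odd_zero_pi (k : ℕ) : ∫ x in (0)..π, cos x ^ (2 * k + 1) = 0 := by
  induction k with
  | zero => simp
  | succ k ih => rw [show 2 * (k + 1) + 1 = 2 * k + 1 + 2 by ring,
      integral_cos_pow_add_two_zero_pi, ih, mul_zero]

lemma integral_cos_pow_even_zero_pi (k : ℕ) :
    ∫ x in (0)..π, cos x ^ (2 * k) = π * (2 * k).factorial / (4 ^ k * (k.factorial : ℝ) ^ 2) := by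
  induction k with
  | zero => simp
  | succ k ih =>
    rw [show 2 * (k + 1) = 2 * k + 2 by ring, integral_cos_pow_add_two_zero_pi, ih,
      Nat.factorial_succ, Nat.factorial_succ, Nat.factorial_succ]
    push_cast
    field_simp
    ring

lemma hasSum_integral_exp_mul_cos (z : ℝ) :
    HasSum (fun n : ℕ => z ^ n / n.factorial * ∫ x in (0)..π, cos x ^ n)
      (∫ x in (0)..π, exp (z * cos x)) := by
  have hbound (n : ℕ) (x : ℝ) : ‖(z * cos x) ^ n / n.factorial‖ ≤ |z| ^ n / n.factorial := by
    rw [norm_div, norm_pow, Real.norm_eq_abs, abs_mul, Real.norm_natCast]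
    gcongr
    exact mul_le_of_le_one_right (abs_nonneg z) (abs_cos_le_one x)
  have hexp (x : ℝ) : HasSum (fun n => (z * cos x) ^ n / n.factorial) (exp (z * cos x)) := by
    simpa [Real.exp_eq_exp_ℝ] using NormedSpace.expSeries_div_hasSum_exp (z * cos x)
  have h := intervalIntegral.hasSum_integral_of_dominated_convergence (μ := volume)
    (a := 0) (b := π) (F := fun (n : ℕ) x => (z * cos x) ^ n / n.factorial)
    (fun n _ => |z| ^ n / n.factorial)
    (fun n => by fun_prop)
    (fun n => ae_of_all _ fun x _ => hbound n x)
    (ae_of_all _ fun _ _ => Real.summable_pow_div_factorial |z|) intervalIntegrable_const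
    (ae_of_all _ fun x _ => hexp x)
  simpa [mul_pow, intervalIntegral.integral_const_mul, div_mul_eq_mul_div, mul_comm] using h

lemma besselI_zero_eq_integral (z : ℝ) :
    besselI 0 z = π⁻¹ * ∫ x in (0)..π, exp (z * cos x) := by
  -- the odd moments of `cos` over `[0, π]` vanish, so only the terms `n = 2 k` survive
  have h := ((mul_right_injective₀ two_ne_zero).hasSum_iff fun n hn => ?_).mpr
    (hasSum_integral_exp_mul_cos z)
  · rw [eq_inv_mul_iff_mul_eq₀ pi_ne_zero, ← h.tsum_eq, besselI, ← tsum_mul_left]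
    congr 1 with k
    simp only [Function.comp_apply, integral_cos_pow_even_zero_pi, add_zero]
    rw [div_pow, show (4 : ℝ) ^ k = 2 ^ (2 * k) by rw [pow_mul]; norm_num]
    field_simp
  · obtain ⟨k, rfl | rfl⟩ := Nat.even_or_odd' n
    · exact absurd ⟨k, rfl⟩ hn
    · rw [integral_cos_pow_odd_zero_pi, mul_zero]

lemma exp_neg_mul_besselI_zero_eq_integral (z : ℝ) :
    exp (-z) * besselI 0 z = π⁻¹ * ∫ x in (0)..π, exp (z * (cos x - 1)) := by
  simp_rw [besselI_zero_eq_integral, mul_sub, mul_one, sub_eq_add_neg, exp_add,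
    intervalIntegral.integral_mul_const]
  ring

lemma cos_le_one_sub_sq_div_two_add (x : ℝ) : cos x ≤ 1 - x ^ 2 / 2 + x ^ 4 / 24 := by
  have hsin := abs_sub_sin_le (x / 2)
  have hcos : cos x = 1 - 2 * sin (x / 2) ^ 2 := by
    rw [sin_sq_eq_half_sub, show 2 * (x / 2) = x by ring]; ring
  have hprod : (x / 2) ^ 2 - sin (x / 2) ^ 2 ≤ 2 * |x / 2| * (|x / 2| ^ 3 / 6) := by
    rw [sq_sub_sq]
    refine (le_abs_self _).trans ?_
    rw [abs_mul]
    gcongr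
    exact (abs_add_le _ _).trans (by linarith [abs_sin_le_abs (x := x / 2)])
  have h4 : |x / 2| ^ 4 = x ^ 4 / 16 := by rw [show 4 = 2 * 2 by rfl, pow_mul, sq_abs]; ring
  nlinarith

lemma exp_sub_exp_le_mul_exp (a b : ℝ) : exp a - exp b ≤ (a - b) * exp a := by
  have := mul_le_mul_of_nonneg_left (one_sub_le_exp_neg (a - b)) (exp_pos a).le
  rw [← exp_add, show a + -(a - b) = b by ring] at this
  linarith

lemma abs_exp_mul_cos_sub_one_sub_gaussian_le {z x : ℝ} (hz : 0 ≤ z) (hx : |x| ≤ π) :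
    |exp (z * (cos x - 1)) - exp (-(z / 2) * x ^ 2)|
      ≤ z / 24 * (x ^ 4 * exp (-(2 / π ^ 2 * z) * x ^ 2)) := by
  have hlow : -(z / 2) * x ^ 2 ≤ z * (cos x - 1) := by
    nlinarith [one_sub_sq_div_two_le_cos (x := x)]
  have hup : z * (cos x - 1) ≤ -(2 / π ^ 2 * z) * x ^ 2 := by
    have := mul_le_mul_of_nonneg_left (cos_le_one_sub_mul_cos_sq hx) hz
    linarith [show -(2 / π ^ 2 * z) * x ^ 2 = z * (1 - 2 / π ^ 2 * x ^ 2) - z by ring]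
  have hgap : z * (cos x - 1) - -(z / 2) * x ^ 2 ≤ z / 24 * x ^ 4 := by
    nlinarith [mul_le_mul_of_nonneg_left (cos_le_one_sub_sq_div_two_add x) hz]
  rw [abs_of_nonneg (sub_nonneg.2 (exp_le_exp.2 hlow)), ← mul_assoc]
  calc _ ≤ (z * (cos x - 1) - -(z / 2) * x ^ 2) * exp (z * (cos x - 1)) :=
        exp_sub_exp_le_mul_exp _ _
    _ ≤ z / 24 * x ^ 4 * exp (-(2 / π ^ 2 * z) * x ^ 2) := by
        gcongr

lemma integrableOn_Ioi_pow_mul_exp_neg_mul_sq (q : ℕ) {b : ℝ} (hb : 0 < b) :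
    IntegrableOn (fun x => x ^ q * exp (-b * x ^ 2)) (Ioi 0) := by
  simpa using integrableOn_rpow_mul_exp_neg_mul_sq hb (s := q)
    (by linarith [q.cast_nonneg (α := ℝ)])

lemma integral_Ioi_pow_mul_exp_neg_mul_sq (q : ℕ) {b : ℝ} (hb : 0 < b) :
    ∫ x in Ioi 0, x ^ q * exp (-b * x ^ 2)
      = Gamma ((q + 1) / 2) / 2 * b ^ (-((q + 1) / 2 : ℝ)) := by
  have := integral_rpow_mul_exp_neg_mul_rpow two_pos (by linarith [q.cast_nonneg (α := ℝ)]) hb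
    (q := q)
  simp only [rpow_natCast, rpow_two] at this
  rw [this, neg_div]
  ring

lemma abs_integral_exp_mul_cos_sub_one_sub_gaussian_le {z : ℝ} (hz : 0 < z) :
    |∫ x in (0)..π, (exp (z * (cos x - 1)) - exp (-(z / 2) * x ^ 2))|
      ≤ Gamma (5 / 2) / 48 * (2 / π ^ 2) ^ (-(5 / 2 : ℝ)) * z ^ (-(3 : ℝ) / 2) := by
  have hb : 0 < 2 / π ^ 2 * z := by positivity
  have hmoment := integral_Ioi_pow_mul_exp_neg_mul_sq 4 hb
  calc _ ≤ ∫ x in (0)..π, z / 24 * (x ^ 4 * exp (-(2 / π ^ 2 * z) * x ^ 2)) := by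
        refine intervalIntegral.abs_integral_le_integral_abs pi_pos.le |>.trans ?_
        refine intervalIntegral.integral_mono_on pi_pos.le
          (Continuous.intervalIntegrable (by fun_prop) _ _)
          (Continuous.intervalIntegrable (by fun_prop) _ _) fun x hx => ?_
        exact abs_exp_mul_cos_sub_one_sub_gaussian_le hz.le
          (abs_le.2 ⟨by linarith [hx.1, pi_pos], hx.2⟩)
    _ ≤ z / 24 * ∫ x in Ioi 0, x ^ 4 * exp (-(2 / π ^ 2 * z) * x ^ 2) := by
        rw [intervalIntegral.integral_const_mul, intervalIntegral.integral_of_le pi_pos.le]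
        refine mul_le_mul_of_nonneg_left (setIntegral_mono_set
          (integrableOn_Ioi_pow_mul_exp_neg_mul_sq 4 hb) ?_ Ioc_subset_Ioi_self.eventuallyLE)
          (by positivity)
        filter_upwards [ae_restrict_mem measurableSet_Ioi] with x hx
        exact mul_nonneg (pow_nonneg (le_of_lt hx) 4) (exp_pos _).le
    _ = _ := by
        rw [hmoment, mul_rpow (by positivity) hz.le, show (-(3 : ℝ) / 2) = 1 + -(5 / 2) by norm_num,
          rpow_add hz, rpow_one]
        norm_num
        ring

lemma integral_Ioi_pi_gaussian_le {z : ℝ} (hz : 0 < z) :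
    ∫ x in Ioi π, exp (-(z / 2) * x ^ 2)
      ≤ Gamma (3 / 2) / (2 * π ^ 2) / 2 ^ (-(3 : ℝ) / 2) * z ^ (-(3 : ℝ) / 2) := by
  have hb : 0 < z / 2 := by positivity
  have hmoment := integral_Ioi_pow_mul_exp_neg_mul_sq 2 hb
  have hint := integrableOn_Ioi_pow_mul_exp_neg_mul_sq 2 hb
  calc _ ≤ ∫ x in Ioi π, (π ^ 2)⁻¹ * (x ^ 2 * exp (-(z / 2) * x ^ 2)) := by
        refine setIntegral_mono_on ?_ ((hint.mono_set (Ioi_subset_Ioi pi_pos.le)).const_mul _)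
          measurableSet_Ioi fun x hx => ?_
        · exact (integrable_exp_neg_mul_sq hb).integrableOn
        · rw [← mul_assoc, le_mul_iff_one_le_left (exp_pos _), one_le_inv_mul₀ (by positivity)]
          exact pow_le_pow_left₀ pi_pos.le (le_of_lt hx) 2
    _ ≤ (π ^ 2)⁻¹ * ∫ x in Ioi 0, x ^ 2 * exp (-(z / 2) * x ^ 2) := by
        rw [integral_const_mul]
        refine mul_le_mul_of_nonneg_left (setIntegral_mono_set hint ?_
          (Ioi_subset_Ioi pi_pos.le).eventuallyLE) (by positivity)
        filter_upwards [ae_restrict_mem measurableSet_Ioi] with x hx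
        exact mul_nonneg (pow_nonneg (le_of_lt hx) 2) (exp_pos _).le
    _ = _ := by
        rw [hmoment, div_rpow hz.le two_pos.le]
        norm_num
        ring

lemma inv_sqrt_two_pi_mul_eq_integral_Ioi {z : ℝ} (hz : 0 < z) :
    (√(2 * π * z))⁻¹ = π⁻¹ * ∫ x in Ioi 0, exp (-(z / 2) * x ^ 2) := by
  rw [integral_gaussian_Ioi, ← sqrt_inv, show π / (z / 2) = 2 ^ 2 * π ^ 2 * (2 * π * z)⁻¹ by
    field_simp, sqrt_mul (by positivity), sqrt_mul (by positivity), sqrt_sq (by positivity),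
    sqrt_sq (by positivity)]
  field_simp

theorem exists_abs_exp_neg_mul_besselI_zero_sub_le :
    ∃ K > 0, ∀ z > 0, |exp (-z) * besselI 0 z - (√(2 * π * z))⁻¹| ≤ K * z ^ (-(3 : ℝ) / 2) := by
  refine ⟨π⁻¹ * (Gamma (5 / 2) / 48 * (2 / π ^ 2) ^ (-(5 / 2 : ℝ))
    + Gamma (3 / 2) / (2 * π ^ 2) / 2 ^ (-(3 : ℝ) / 2)), by positivity, fun z hz => ?_⟩
  have hgauss : Integrable fun x : ℝ => exp (-(z / 2) * x ^ 2) :=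
    integrable_exp_neg_mul_sq (by positivity)
  have hsplit := intervalIntegral.integral_interval_add_Ioi (a := 0) (b := π)
    hgauss.integrableOn hgauss.integrableOn
  have hdiff := intervalIntegral.integral_sub (a := 0) (b := π) (μ := volume)
    (f := fun x => exp (z * (cos x - 1))) (g := fun x => exp (-(z / 2) * x ^ 2))
    (Continuous.intervalIntegrable (by fun_prop) _ _) hgauss.intervalIntegrable
  have htail_nonneg : 0 ≤ ∫ x in Ioi π, exp (-(z / 2) * x ^ 2) :=
    setIntegral_nonneg measurableSet_Ioi fun x _ => (exp_pos _).le
  rw [exp_neg_mul_besselI_zero_eq_integral, inv_sqrt_two_pi_mul_eq_integral_Ioi hz, ← hsplit,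
    ← mul_sub, abs_mul, abs_inv, abs_of_pos pi_pos, mul_assoc]
  gcongr
  calc _ = |(∫ x in (0)..π, (exp (z * (cos x - 1)) - exp (-(z / 2) * x ^ 2)))
        - ∫ x in Ioi π, exp (-(z / 2) * x ^ 2)| := by rw [hdiff, sub_add_eq_sub_sub]
    _ ≤ |∫ x in (0)..π, (exp (z * (cos x - 1)) - exp (-(z / 2) * x ^ 2))|
        + |∫ x in Ioi π, exp (-(z / 2) * x ^ 2)| := abs_sub _ _
    _ ≤ _ := by
      rw [abs_of_nonneg htail_nonneg, add_mul]
      exact add_le_add (abs_integral_exp_mul_cos_sub_one_sub_gaussian_le hz)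
        (integral_Ioi_pi_gaussian_le hz)

lemma inv_sqrt_sub_inv_sqrt_le {z w : ℝ} (hz : 0 < z) (hzw : z ≤ w) :
    (√z)⁻¹ - (√w)⁻¹ ≤ (w - z) / z * (√z)⁻¹ := by
  have hw : 0 < w := hz.trans_le hzw
  have hsz := sqrt_pos.2 hz
  have hsw := sqrt_pos.2 hw
  have hle : √z ≤ √w := sqrt_le_sqrt hzw
  rw [inv_sub_inv hsz.ne' hsw.ne', div_le_iff₀ (by positivity)]
  have := sq_sqrt hz.le
  have := sq_sqrt hw.le
  field_simp
  nlinarith [mul_le_mul_of_nonneg_left hle hsz.le]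

lemma abs_exp_sub_mul_sub_inv_sqrt_le {z w : ℝ} (hz : 0 < z) (hzw : z ≤ w) (E : ℝ) :
    |exp (z - w) * E - (√(2 * π * w))⁻¹|
      ≤ |E - (√(2 * π * z))⁻¹| + (w - z) * (1 + z⁻¹) * (√(2 * π * z))⁻¹ := by
  set φz := (√(2 * π * z))⁻¹
  set φw := (√(2 * π * w))⁻¹
  have hexp_le : exp (z - w) ≤ 1 := exp_le_one_iff.2 (by linarith)
  have hone_sub : 1 - exp (z - w) ≤ w - z := by linarith [add_one_le_exp (z - w)]
  have hφ : φz - φw ≤ (w - z) / z * φz := by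
    have := inv_sqrt_sub_inv_sqrt_le (by positivity : 0 < 2 * π * z)
      (mul_le_mul_of_nonneg_left hzw (by positivity))
    rwa [← mul_sub, mul_div_mul_left _ _ (by positivity)] at this
  have hφ0 : 0 ≤ φz - φw := sub_nonneg.2 <| inv_anti₀ (by positivity) <|
    sqrt_le_sqrt (mul_le_mul_of_nonneg_left hzw (by positivity))
  calc |exp (z - w) * E - φw|
      = |exp (z - w) * (E - φz) - ((1 - exp (z - w)) * φz - (φz - φw))| := by ring_nf
    _ ≤ |exp (z - w) * (E - φz)| + |(1 - exp (z - w)) * φz - (φz - φw)| := abs_sub _ _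
    _ ≤ |E - φz| + (|(1 - exp (z - w)) * φz| + |φz - φw|) := by
      refine add_le_add ?_ (abs_sub _ _)
      rw [abs_mul, abs_of_pos (exp_pos _)]
      exact mul_le_of_le_one_left (abs_nonneg _) hexp_le
    _ ≤ |E - φz| + ((w - z) * φz + (w - z) / z * φz) := by
      rw [abs_mul, abs_of_nonneg (sub_nonneg.2 hexp_le), abs_of_nonneg (by positivity : 0 ≤ φz),
        abs_of_nonneg hφ0]
      gcongr
    _ = _ := by ring

lemma half_le_sqrt_sq_sub_sq {a t : ℝ} (h : 2 * |a| ≤ t) : t / 2 ≤ √(t ^ 2 - a ^ 2) := by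
  refine le_sqrt_of_sq_le ?_
  nlinarith [sq_abs a, abs_nonneg a]

lemma sqrt_sq_sub_sq_le {a t : ℝ} (ht : 0 ≤ t) : √(t ^ 2 - a ^ 2) ≤ t :=
  sqrt_le_iff.2 ⟨ht, by nlinarith [sq_nonneg a]⟩

lemma sub_sqrt_sq_sub_sq_le {a t : ℝ} (ht : 0 < t) (hat : |a| ≤ t) :
    t - √(t ^ 2 - a ^ 2) ≤ a ^ 2 / t := by
  have hs : √(t ^ 2 - a ^ 2) ^ 2 = t ^ 2 - a ^ 2 :=
    sq_sqrt (by nlinarith [sq_abs a, abs_nonneg a])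
  rw [le_div_iff₀ ht]
  nlinarith [sqrt_nonneg (t ^ 2 - a ^ 2), sqrt_sq_sub_sq_le (a := a) ht.le]

lemma inv_mul_inv_sqrt_eq_rpow {t : ℝ} (ht : 0 < t) : t⁻¹ * (√t)⁻¹ = t ^ (-(3 : ℝ) / 2) := by
  rw [sqrt_eq_rpow, ← rpow_neg_one, ← rpow_neg ht.le, ← rpow_add ht]
  norm_num

theorem exists_abs_exp_neg_mul_besselI_zero_sqrt_sub_le {lam : ℝ} (hlam : 0 < lam) (a : ℝ) :
    ∃ C, ∀ t ≥ max (2 * |a|) (2 / lam),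
      |exp (-(lam * t)) * besselI 0 (lam * √(t ^ 2 - a ^ 2)) - (√(2 * π * (lam * t)))⁻¹|
        ≤ C * t ^ (-(3 : ℝ) / 2) := by
  obtain ⟨K, hK, hbessel⟩ := exists_abs_exp_neg_mul_besselI_zero_sub_le
  refine ⟨K * (lam / 2) ^ (-(3 : ℝ) / 2) + 2 * lam * a ^ 2 * (√(π * lam))⁻¹, fun t ht => ?_⟩
  obtain ⟨hat, hlt⟩ := max_le_iff.1 ht
  have ht0 : 0 < t := lt_of_lt_of_le (by positivity) hlt
  set s := √(t ^ 2 - a ^ 2)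
  have hs_ge : t / 2 ≤ s := half_le_sqrt_sq_sub_sq hat
  have hs_le : s ≤ t := sqrt_sq_sub_sq_le ht0.le
  have hgap : t - s ≤ a ^ 2 / t := sub_sqrt_sq_sub_sq_le ht0 (by linarith [abs_nonneg a])
  have hz : lam / 2 * t ≤ lam * s := by nlinarith
  have hz1 : 1 ≤ lam * s := by
    have := mul_le_mul_of_nonneg_left hlt (by positivity : 0 ≤ lam / 2)
    rw [show lam / 2 * (2 / lam) = 1 by field_simp] at this
    linarith
  have hz0 : 0 < lam * s := by linarith
  rw [show -(lam * t) = (lam * s - lam * t) + -(lam * s) by ring, exp_add, mul_assoc]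
  calc _ ≤ |exp (-(lam * s)) * besselI 0 (lam * s) - (√(2 * π * (lam * s)))⁻¹|
        + (lam * t - lam * s) * (1 + (lam * s)⁻¹) * (√(2 * π * (lam * s)))⁻¹ :=
        abs_exp_sub_mul_sub_inv_sqrt_le hz0 (by nlinarith) _
    _ ≤ K * (lam / 2 * t) ^ (-(3 : ℝ) / 2)
          + lam * (a ^ 2 / t) * 2 * (√(2 * π * (lam / 2 * t)))⁻¹ := by
        gcongr
        · exact (hbessel _ hz0).trans (mul_le_mul_of_nonneg_left
            (rpow_le_rpow_of_nonpos (by positivity) hz (by norm_num)) hK.le)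
        · nlinarith
        · linarith [inv_le_one_of_one_le₀ hz1]
    _ = _ := by
        rw [mul_rpow (by positivity) ht0.le, ← inv_mul_inv_sqrt_eq_rpow ht0,
          show 2 * π * (lam / 2 * t) = π * lam * t by ring, sqrt_mul (by positivity)]
        field_simp

theorem common_bessel_term_asymptotics (c lam x : ℝ) (hc : 0 < c) (hlam : 0 < lam) :
    ∃ C > 0, ∃ T > |x| / c, ∀ t ≥ T,
      |lam * Real.exp (-(lam * t)) / (2 * c) *
            besselI 0 (lam / c * Real.sqrt (c ^ 2 * t ^ 2 - x ^ 2)) -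
          1 / (2 * c) * Real.sqrt (lam / (2 * Real.pi * t))| ≤ C * t ^ (-(3 : ℝ) / 2) := by
  obtain ⟨C, hC⟩ := exists_abs_exp_neg_mul_besselI_zero_sqrt_sub_le hlam (x / c)
  have hxc : |x / c| = |x| / c := by rw [abs_div, abs_of_pos hc]
  refine ⟨lam / (2 * c) * max C 1, by positivity, max (2 * |x / c|) (2 / lam) + 1,
    by linarith [le_max_left (2 * |x / c|) (2 / lam), abs_nonneg (x / c)], fun t ht => ?_⟩
  have ht0 : 0 < t := by linarith [le_max_right (2 * |x / c|) (2 / lam), div_pos two_pos hlam]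
  have harg : lam / c * √(c ^ 2 * t ^ 2 - x ^ 2) = lam * √(t ^ 2 - (x / c) ^ 2) := by
    rw [show c ^ 2 * t ^ 2 - x ^ 2 = c ^ 2 * (t ^ 2 - (x / c) ^ 2) by field_simp,
      sqrt_mul (sq_nonneg c), sqrt_sq hc.le]
    field_simp
  have hsqrt : √(lam / (2 * π * t)) = lam * (√(2 * π * (lam * t)))⁻¹ := by
    rw [← sqrt_inv, ← sqrt_sq hlam.le, ← sqrt_mul (sq_nonneg _), sqrt_sq hlam.le]
    congr 1
    field_simp
  rw [harg, hsqrt, show ∀ e b φ : ℝ, lam * e / (2 * c) * b - 1 / (2 * c) * (lam * φ)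
    = lam / (2 * c) * (e * b - φ) by intros; ring, abs_mul,
    abs_of_pos (by positivity : 0 < lam / (2 * c)), mul_assoc (lam / (2 * c))]
  refine mul_le_mul_of_nonneg_left ((hC t (by linarith)).trans ?_) (by positivity)
  gcongr
  exact le_max_left _ _
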